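/- arXiv:2101.03307 — 3 statements merged into one kernel-verified Lean document; each statement's English description precedes it below -/
import Mathlib

section
/- (Anisotropic Larson inequality) Let Ω, K ⊂ ℝⁿ be convex bodies with nonempty interior and r = r(Ω,K) the relative inradius. Then for every λ ≥ 0, Per_K(Ω ∼ λK) ≥ (1 − λ/r)₊^{n−1} · Per_K(Ω), where (·)₊ denotes the positive part. -/
open Pointwise MeasureTheory Set

noncomputable section

/-- The inner parallel body `Ω ∼ λK = {x : x + λK ⊆ Ω}`. -/
def innerPar {n : ℕ} (Ω K : Set (EuclideanSpace ℝ (Fin n))) (l : ℝ) :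
    Set (EuclideanSpace ℝ (Fin n)) :=
  {x | ∀ y ∈ K, x + l • y ∈ Ω}

/-- The inradius of `Ω` relative to `K`. -/
def inrad {n : ℕ} (Ω K : Set (EuclideanSpace ℝ (Fin n))) : ℝ :=
  sSup {l : ℝ | 0 ≤ l ∧ ∃ x, ∀ y ∈ K, x + l • y ∈ Ω}

/-- The anisotropic perimeter of `C` relative to `K`, realized as the anisotropic
Minkowski content `d/dt V_n(C + tK) |_{t=0⁺}`. -/
def aniPer {n : ℕ} (C K : Set (EuclideanSpace ℝ (Fin n))) : ℝ :=
  derivWithin (fun t : ℝ => (volume (C + t • K)).toReal) (Set.Ici (0:ℝ)) 0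

/-- The mixed volume `V(C,…,C,K,…,K)` with `i` copies of `K`, extracted as the
`i`-th Taylor coefficient (over `binom n i`) of `t ↦ V_n(C + tK)` at `t = 0⁺`. -/
def mixedVol {n : ℕ} (i : ℕ) (C K : Set (EuclideanSpace ℝ (Fin n))) : ℝ :=
  iteratedDerivWithin i (fun t : ℝ => (volume (C + t • K)).toReal) (Set.Ici (0:ℝ)) 0
    / (n.choose i * i.factorial)

/-!
WLOG `0 ∈ K`. The key fact is that for compact `A ⊆ B` with `A` convex, the volume gap
`|A + K| - |A|` is at most `|B + K| - |B|`. For `A = B ∩ {φ ≤ c}` this is a translation argument: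
the new part of `(A + K) \ A` is the slab `B ∩ {c < φ ≤ c + max_K φ}`, which is moved injectively
into the part of `(B + K) \ B` beyond that slab; a general convex `A` is a countable
intersection of half-spaces. Applied to `A = C` and `B = C + sK`, the gap `g(t) = |C + tK| - |C|`
is superadditive, so `Per_K(C) = g'(0⁺) = inf_{t > 0} g(t)/t`. Finally, if `x₀ + rK ⊆ Ω`, then
`Ω ∼ λK` contains the homothetic copy `(λ/r) x₀ + (1 - λ/r) Ω`, whose gaps are those of `Ω`
rescaled by `(1 - λ/r)ⁿ`.
-/

open Filter Topology Module

theorem slope_le_of_superadditive {g : ℝ → ℝ} (hnonneg : ∀ t, 0 ≤ t → 0 ≤ g t)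
    (hsup : ∀ s t, 0 ≤ s → 0 ≤ t → g s + g t ≤ g (s + t)) {t s : ℝ} (ht : 0 < t) (hts : t < s) :
    g t / t ≤ g s / (s - t) := by
  have hmul : ∀ m : ℕ, m * g t ≤ g (m * t) := by
    intro m
    induction m with
    | zero => simpa using hnonneg 0 le_rfl
    | succ m ih =>
      have := hsup (m * t) t (by positivity) ht.le
      push_cast
      simp only [add_one_mul]
      linarith
  set m := ⌊s / t⌋₊
  have hmt : m * t ≤ s := by
    have := Nat.floor_le (div_nonneg (ht.le.trans hts.le) ht.le)
    calc m * t ≤ s / t * t := by gcongr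
      _ = s := div_mul_cancel₀ s ht.ne'
  have hsm : s - t < m * t := by
    have := Nat.lt_floor_add_one (s / t)
    have : s < (m + 1) * t := by rwa [div_lt_iff₀ ht] at this
    linarith
  have hgs : m * g t ≤ g s := by
    have := hsup (m * t) (s - m * t) (by positivity) (by linarith)
    rw [add_sub_cancel] at this
    linarith [hmul m, hnonneg (s - m * t) (by linarith)]
  rw [div_le_div_iff₀ ht (by linarith)]
  nlinarith [hnonneg t ht.le]

def slopeInf (g : ℝ → ℝ) : ℝ := sInf ((fun t => g t / t) '' Ioi 0)

theorem slopeInf_le {g : ℝ → ℝ} (hnonneg : ∀ t, 0 ≤ t → 0 ≤ g t) {t : ℝ} (ht : 0 < t) :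
    slopeInf g ≤ g t / t := by
  refine csInf_le ⟨0, ?_⟩ ⟨t, ht, rfl⟩
  rintro _ ⟨u, hu, rfl⟩
  exact div_nonneg (hnonneg u (le_of_lt hu)) (le_of_lt hu)

theorem le_slopeInf {g : ℝ → ℝ} {a : ℝ} (h : ∀ t, 0 < t → a ≤ g t / t) : a ≤ slopeInf g :=
  le_csInf ⟨g 1 / 1, 1, mem_Ioi.2 one_pos, rfl⟩ (by rintro _ ⟨t, ht, rfl⟩; exact h t ht)

theorem hasDerivWithinAt_slopeInf_of_superadditive {g : ℝ → ℝ} (hg0 : g 0 = 0)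
    (hnonneg : ∀ t, 0 ≤ t → 0 ≤ g t) (hsup : ∀ s t, 0 ≤ s → 0 ≤ t → g s + g t ≤ g (s + t)) :
    HasDerivWithinAt g (slopeInf g) (Ici 0) 0 := by
  rw [← hasDerivWithinAt_Ioi_iff_Ici,
    hasDerivWithinAt_iff_tendsto_slope' (s := Ioi 0) (lt_irrefl 0)]
  refine tendsto_order.2 ⟨fun a ha => ?_, fun b hb => ?_⟩
  · refine eventually_nhdsWithin_of_forall fun t ht => ?_
    simpa [slope_def_field, hg0] using ha.trans_le (slopeInf_le hnonneg ht)
  · obtain ⟨_, ⟨s, hs, rfl⟩, hsb⟩ := exists_lt_of_csInf_lt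
      (show ((fun t => g t / t) '' Ioi 0).Nonempty from ⟨g 1 / 1, 1, mem_Ioi.2 one_pos, rfl⟩) hb
    have hs : (0 : ℝ) < s := hs
    have hlim : Tendsto (fun t => g s / (s - t)) (𝓝[>] 0) (𝓝 (g s / s)) := by
      refine tendsto_nhdsWithin_of_tendsto_nhds ?_
      have hc : ContinuousAt (fun t : ℝ => g s / (s - t)) 0 :=
        continuousAt_const.div (continuousAt_const.sub continuousAt_id) (by simpa using hs.ne')
      simpa using hc.tendsto
    filter_upwards [hlim.eventually (gt_mem_nhds hsb), Ioo_mem_nhdsGT hs] with t hbt ht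
    simpa [slope_def_field, hg0] using
      (slope_le_of_superadditive hnonneg hsup ht.1 ht.2).trans_lt hbt

theorem exists_seq_halfSpaces_iInter_eq {E : Type*} [NormedAddCommGroup E] [NormedSpace ℝ E]
    [SecondCountableTopology E] {A : Set E} (hconv : Convex ℝ A) (hclosed : IsClosed A) :
    ∃ (φ : ℕ → StrongDual ℝ E) (c : ℕ → ℝ), ⋂ i, φ i ⁻¹' Iic (c i) = A := by
  let H : {p : StrongDual ℝ E × ℝ // A ⊆ p.1 ⁻¹' Iic p.2} → Set E := fun p => p.1.1 ⁻¹' Iic p.1.2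
  have hA : ⋂ p, H p = A := by
    refine subset_antisymm (fun x hx => ?_) (subset_iInter fun p => p.2)
    by_contra hxA
    obtain ⟨f, u, hfA, hux⟩ := geometric_hahn_banach_closed_point hconv hclosed hxA
    exact (mem_iInter.1 hx ⟨(f, u), fun a ha => (hfA a ha).le⟩).not_gt hux
  -- Lindelöf: countably many of the open complements already cover `Aᶜ`
  obtain ⟨T, hTc, hT⟩ := TopologicalSpace.isOpen_iUnion_countable (fun p => (H p)ᶜ)
    fun p => (isClosed_Iic.preimage p.1.1.continuous).isOpen_compl
  have hT' : ⋂ p ∈ T, H p = ⋂ p, H p := by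
    simpa only [compl_iUnion, compl_compl] using congrArg compl hT
  let p₀ : {p : StrongDual ℝ E × ℝ // A ⊆ p.1 ⁻¹' Iic p.2} := ⟨(0, 0), fun _ _ => by simp⟩
  obtain ⟨e, he⟩ := (hTc.insert p₀).exists_eq_range (insert_nonempty p₀ T)
  refine ⟨fun i => (e i).1.1, fun i => (e i).1.2, ?_⟩
  have hH₀ : H p₀ = univ := eq_univ_of_forall fun x => by simp [H, p₀]
  calc ⋂ i, H (e i) = ⋂ p ∈ insert p₀ T, H p := by rw [he, biInter_range]
    _ = A := by rw [biInter_insert, hH₀, univ_inter, hT', hA]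

theorem iInter_add_of_antitone {G : Type*} [TopologicalSpace G] [AddCommGroup G]
    [IsTopologicalAddGroup G] [T2Space G] {B : ℕ → Set G} {K : Set G}
    (hB : ∀ m, IsCompact (B m)) (hanti : Antitone B) (hK : IsClosed K) :
    ⋂ m, (B m + K) = (⋂ m, B m) + K := by
  refine subset_antisymm (fun x hx => ?_)
    (subset_iInter fun m => add_subset_add_right (iInter_subset B m))
  have hxK : IsClosed ((x - ·) ⁻¹' K) := hK.preimage (continuous_const.sub continuous_id)
  obtain ⟨b, hb⟩ := IsCompact.nonempty_iInter_of_sequence_nonempty_isCompact_isClosed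
    (fun m => B m ∩ (x - ·) ⁻¹' K) (fun m => inter_subset_inter_left _ (hanti m.le_succ))
    (fun m => by
      obtain ⟨b, hb, k, hk, rfl⟩ := mem_iInter.1 hx m
      exact ⟨b, hb, by simpa using hk⟩)
    ((hB 0).inter_right hxK) (fun m => (hB m).isClosed.inter hxK)
  exact ⟨b, mem_iInter.2 fun m => (mem_iInter.1 hb m).1, x - b, (mem_iInter.1 hb 0).2,
    add_sub_cancel b x⟩

section VolumeGap

variable {E : Type*} [NormedAddCommGroup E] [MeasurableSpace E] [BorelSpace E]
  {μ : Measure E} [μ.IsAddHaarMeasure]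

variable (μ) in
def volGap (A K : Set E) : ℝ := μ.real (A + K) - μ.real A

theorem volGap_eq_measureReal_diff {A K : Set E} (hA : IsCompact A) (hK : IsCompact K)
    (h0K : (0 : E) ∈ K) : volGap μ A K = μ.real ((A + K) \ A) :=
  (measureReal_sdiff (subset_add_left A h0K) hA.measurableSet (hA.add hK).measure_lt_top.ne).symm

theorem volGap_nonneg {A K : Set E} (hA : IsCompact A) (hK : IsCompact K) (h0K : (0 : E) ∈ K) :
    0 ≤ volGap μ A K := by
  rw [volGap_eq_measureReal_diff hA hK h0K]
  exact measureReal_nonneg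

theorem tendsto_volGap_of_antitone {A K : Set E} {B : ℕ → Set E} (hB : ∀ m, IsCompact (B m))
    (hanti : Antitone B) (hBA : ⋂ m, B m = A) (hK : IsCompact K) :
    Tendsto (fun m => volGap μ (B m) K) atTop (𝓝 (volGap μ A K)) := by
  have hA : A ⊆ B 0 := hBA ▸ iInter_subset B 0
  have hB' : Tendsto (fun m => μ (B m)) atTop (𝓝 (μ A)) := hBA ▸
    tendsto_measure_iInter_atTop (fun m => (hB m).measurableSet.nullMeasurableSet) hanti
      ⟨0, (hB 0).measure_lt_top.ne⟩
  have hBK : Tendsto (fun m => μ (B m + K)) atTop (𝓝 (μ (A + K))) := by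
    rw [← hBA, ← iInter_add_of_antitone hB hanti hK.isClosed]
    exact tendsto_measure_iInter_atTop
      (fun m => ((hB m).add hK).measurableSet.nullMeasurableSet)
      (fun m m' hmm' => add_subset_add_right (hanti hmm'))
      ⟨0, ((hB 0).add hK).measure_lt_top.ne⟩
  have hA_fin : μ A ≠ ⊤ := (measure_mono hA).trans_lt (hB 0).measure_lt_top |>.ne
  have hAK_fin : μ (A + K) ≠ ⊤ :=
    (measure_mono (add_subset_add_right hA)).trans_lt ((hB 0).add hK).measure_lt_top |>.ne
  simp only [volGap, measureReal_def]
  exact ((ENNReal.tendsto_toReal hAK_fin).comp hBK).sub ((ENNReal.tendsto_toReal hA_fin).comp hB')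

variable [NormedSpace ℝ E]

theorem volGap_vadd_smul [FiniteDimensional ℝ E] (v : E) {c : ℝ} (hc : 0 ≤ c) (A K : Set E) :
    volGap μ (v +ᵥ c • A) (c • K) = c ^ finrank ℝ E * volGap μ A K := by
  simp only [volGap, vadd_add_assoc, ← smul_add, measureReal_def, measure_vadd,
    Measure.addHaar_smul_of_nonneg μ hc, ENNReal.toReal_mul,
    ENNReal.toReal_ofReal (pow_nonneg hc _)]
  ring

/-- Every point `x` of the slab is moved by the first multiple `j • k` with `x + j • k ∉ B`;
the images of different `j` lie in disjoint slabs of width `φ k` and are therefore disjoint. -/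
theorem measure_slab_le_measure_collar {B K : Set E} (hB : IsCompact B) (hK : IsCompact K)
    {φ : StrongDual ℝ E} {k : E} (hk : k ∈ K) (hφk : 0 < φ k) (c : ℝ) :
    μ (B ∩ φ ⁻¹' Ioc c (c + φ k)) ≤ μ (((B + K) \ B) \ φ ⁻¹' Iic (c + φ k)) := by
  set h := φ k
  have hφ_nsmul : ∀ (x : E) (m : ℕ), φ (x + m • k) = φ x + m * h := fun x m => by
    rw [map_add, map_nsmul, nsmul_eq_mul]
  set piece : ℕ → Set E :=
    fun m => (B + K) \ B ∩ φ ⁻¹' Ioc (c + (m + 1) * h) (c + (m + 2) * h)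
  have hpiece_meas : ∀ m, MeasurableSet (piece m) := fun m =>
    ((hB.add hK).measurableSet.diff hB.measurableSet).inter
      (φ.continuous.measurable measurableSet_Ioc)
  have hpiece_disj : Pairwise (Function.onFun Disjoint piece) := by
    refine (pairwise_disjoint_on piece).2 fun m m' hmm' => disjoint_left.2 ?_
    rintro x ⟨-, -, hxm⟩ ⟨-, hxm', -⟩
    have : (m : ℝ) + 2 ≤ m' + 1 := by exact_mod_cast Nat.add_le_add_right hmm' 1
    nlinarith
  have hpiece_sub : ⋃ m, piece m ⊆ ((B + K) \ B) \ φ ⁻¹' Iic (c + h) := by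
    refine iUnion_subset fun m => ?_
    rintro x ⟨hx, hxm, -⟩
    refine ⟨hx, fun hxc => ?_⟩
    have : (1 : ℝ) ≤ m + 1 := by linarith [(Nat.cast_nonneg m : (0 : ℝ) ≤ m)]
    nlinarith [show φ x ≤ c + h from hxc]
  have hcover : B ∩ φ ⁻¹' Ioc c (c + h) ⊆ ⋃ m : ℕ, (· + (m + 1) • k) ⁻¹' piece m := by
    classical
    rintro x ⟨hxB, hxc, hxh⟩
    obtain ⟨M, hM⟩ := (hB.image φ.continuous).bddAbove
    have hesc : ∃ j : ℕ, x + j • k ∉ B := by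
      obtain ⟨j, hj⟩ := exists_nat_gt ((M - φ x) / h)
      refine ⟨j, fun hj' => ?_⟩
      have := hM (mem_image_of_mem φ hj')
      rw [hφ_nsmul] at this
      rw [div_lt_iff₀ hφk] at hj
      linarith
    obtain ⟨m, hm⟩ := Nat.exists_eq_add_one_of_ne_zero fun h0 : Nat.find hesc = 0 =>
      Nat.find_spec hesc (by simpa [h0] using hxB)
    have hmB : x + m • k ∈ B := not_not.1 (Nat.find_min hesc (hm ▸ m.lt_succ_self))
    refine mem_iUnion.2 ⟨m, ⟨?_, hm ▸ Nat.find_spec hesc⟩, ?_⟩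
    · show x + (m + 1) • k ∈ B + K
      rw [succ_nsmul, ← add_assoc]
      exact add_mem_add hmB hk
    · simp only [mem_preimage, hφ_nsmul, mem_Ioc] at hxc hxh ⊢
      push_cast
      constructor <;> linarith
  calc μ (B ∩ φ ⁻¹' Ioc c (c + h))
      ≤ ∑' m : ℕ, μ ((· + (m + 1) • k) ⁻¹' piece m) := (measure_mono hcover).trans
        (measure_iUnion_le _)
    _ = μ (⋃ m, piece m) := by
      simp only [measure_preimage_add_right]
      exact (measure_iUnion hpiece_disj hpiece_meas).symm
    _ ≤ μ (((B + K) \ B) \ φ ⁻¹' Iic (c + h)) := measure_mono hpiece_sub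

theorem measure_add_diff_inter_halfSpace_le {B K : Set E} (hB : IsCompact B) (hK : IsCompact K)
    (h0K : (0 : E) ∈ K) (φ : StrongDual ℝ E) (c : ℝ) :
    μ ((B ∩ φ ⁻¹' Iic c + K) \ (B ∩ φ ⁻¹' Iic c)) ≤ μ ((B + K) \ B) := by
  obtain ⟨k, hk, hkmax⟩ := hK.exists_isMaxOn ⟨0, h0K⟩ φ.continuous.continuousOn
  set h := φ k
  have hh : 0 ≤ h := by simpa using hkmax h0K
  have hcover : (B ∩ φ ⁻¹' Iic c + K) \ (B ∩ φ ⁻¹' Iic c) ⊆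
      (B + K) \ B ∩ φ ⁻¹' Iic (c + h) ∪ B ∩ φ ⁻¹' Ioc c (c + h) := by
    rintro _ ⟨⟨a, ha, y, hy, rfl⟩, hnot⟩
    have hle : φ (a + y) ≤ c + h := by
      rw [map_add]
      exact add_le_add ha.2 (hkmax hy)
    by_cases hB' : a + y ∈ B
    · exact Or.inr ⟨hB', lt_of_not_ge fun hc => hnot ⟨hB', hc⟩, hle⟩
    · exact Or.inl ⟨⟨add_mem_add ha.1 hy, hB'⟩, hle⟩
  have hslab : μ (B ∩ φ ⁻¹' Ioc c (c + h)) ≤ μ (((B + K) \ B) \ φ ⁻¹' Iic (c + h)) := by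
    rcases hh.eq_or_lt with h0 | hpos
    · simp [← h0]
    · exact measure_slab_le_measure_collar hB hK hk hpos c
  calc μ ((B ∩ φ ⁻¹' Iic c + K) \ (B ∩ φ ⁻¹' Iic c))
      ≤ μ ((B + K) \ B ∩ φ ⁻¹' Iic (c + h)) + μ (B ∩ φ ⁻¹' Ioc c (c + h)) :=
        (measure_mono hcover).trans (measure_union_le _ _)
    _ ≤ μ ((B + K) \ B ∩ φ ⁻¹' Iic (c + h)) + μ (((B + K) \ B) \ φ ⁻¹' Iic (c + h)) := by
      gcongr
    _ = μ ((B + K) \ B) := measure_inter_add_sdiff _ (φ.continuous.measurable measurableSet_Iic)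

variable [SecondCountableTopology E]

theorem volGap_mono {A B K : Set E} (hA : IsCompact A) (hAconv : Convex ℝ A) (hB : IsCompact B)
    (hK : IsCompact K) (h0K : (0 : E) ∈ K) (hAB : A ⊆ B) :
    volGap μ A K ≤ volGap μ B K := by
  obtain ⟨φ, c, hφc⟩ := exists_seq_halfSpaces_iInter_eq hAconv hA.isClosed
  set C : ℕ → Set E := fun m => B ∩ ⋂ i < m, φ i ⁻¹' Iic (c i)
  have hC : ∀ m, IsCompact (C m) := fun m =>
    hB.inter_right (isClosed_biInter fun i _ => isClosed_Iic.preimage (φ i).continuous)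
  have hC_succ : ∀ m, C (m + 1) = C m ∩ φ m ⁻¹' Iic (c m) := fun m => by
    simp only [C, biInter_lt_succ, inter_assoc]
  have hC_le : ∀ m, volGap μ (C m) K ≤ volGap μ B K := by
    intro m
    induction m with
    | zero => simp [C]
    | succ m ih =>
      refine le_trans ?_ ih
      rw [volGap_eq_measureReal_diff (hC _) hK h0K, volGap_eq_measureReal_diff (hC m) hK h0K,
        hC_succ]
      exact ENNReal.toReal_mono
        ((measure_mono sdiff_subset).trans_lt ((hC m).add hK).measure_lt_top).ne
        (measure_add_diff_inter_halfSpace_le (hC m) hK h0K (φ m) (c m))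
  have hanti : Antitone C := antitone_nat_of_succ_le fun m => (hC_succ m).symm ▸ inter_subset_left
  have hCA : ⋂ m, C m = A := by
    refine subset_antisymm (fun x hx => ?_) (subset_iInter fun m => subset_inter hAB ?_)
    · rw [← hφc]
      exact mem_iInter.2 fun i => mem_iInter₂.1 (mem_iInter.1 hx (i + 1)).2 i i.lt_succ_self
    · rw [← hφc]
      exact subset_iInter₂ fun i _ => iInter_subset _ i
  exact le_of_tendsto' (tendsto_volGap_of_antitone hC hanti hCA hK) hC_le

theorem volGap_smul_add_le {C K : Set E} (hC : IsCompact C) (hCconv : Convex ℝ C)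
    (hK : IsCompact K) (hKconv : Convex ℝ K) (h0K : (0 : E) ∈ K) {s t : ℝ} (hs : 0 ≤ s)
    (ht : 0 ≤ t) : volGap μ C (s • K) + volGap μ C (t • K) ≤ volGap μ C ((s + t) • K) := by
  have hsplit : volGap μ C ((s + t) • K) = volGap μ C (s • K) + volGap μ (C + s • K) (t • K) := by
    rw [volGap, volGap, volGap, hKconv.add_smul hs ht, ← add_assoc]
    ring
  rw [hsplit]
  gcongr
  exact volGap_mono hC hCconv (hC.add (hK.smul s)) (hK.smul t) (zero_mem_smul_set h0K)
    (subset_add_left C (zero_mem_smul_set h0K))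

theorem hasDerivWithinAt_measureReal_add_smul {C K : Set E} (hC : IsCompact C)
    (hCconv : Convex ℝ C) (hK : IsCompact K) (hKconv : Convex ℝ K) (h0K : (0 : E) ∈ K) :
    HasDerivWithinAt (fun t : ℝ => μ.real (C + t • K)) (slopeInf fun t => volGap μ C (t • K))
      (Ici 0) 0 := by
  have hg0 : volGap μ C ((0 : ℝ) • K) = 0 := by
    rw [volGap, zero_smul_set ⟨0, h0K⟩, add_zero, sub_self]
  have := (hasDerivWithinAt_slopeInf_of_superadditive hg0
    (fun t _ => volGap_nonneg hC (hK.smul t) (zero_mem_smul_set h0K))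
    (fun s t hs ht => volGap_smul_add_le hC hCconv hK hKconv h0K hs ht)).add_const (μ.real C)
  simpa [volGap] using this

end VolumeGap

section RelativeGeometry

variable {n : ℕ} {Ω K : Set (EuclideanSpace ℝ (Fin n))}

theorem innerPar_eq_iInter (Ω K : Set (EuclideanSpace ℝ (Fin n))) (l : ℝ) :
    innerPar Ω K l = ⋂ y ∈ K, (· + l • y) ⁻¹' Ω := by
  ext x
  simp [innerPar]

theorem convex_innerPar (hΩ : Convex ℝ Ω) (l : ℝ) : Convex ℝ (innerPar Ω K l) := by
  rw [innerPar_eq_iInter]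
  exact convex_iInter₂ fun y _ => by simpa [add_comm] using hΩ.translate_preimage_right (l • y)

theorem isClosed_innerPar (hΩ : IsClosed Ω) (l : ℝ) : IsClosed (innerPar Ω K l) := by
  rw [innerPar_eq_iInter]
  exact isClosed_biInter fun y _ => hΩ.preimage (continuous_id.add continuous_const)

theorem innerPar_subset (h0K : 0 ∈ K) (l : ℝ) : innerPar Ω K l ⊆ Ω := fun x hx => by
  simpa using hx 0 h0K

theorem isCompact_innerPar (hΩ : IsCompact Ω) (h0K : 0 ∈ K) (l : ℝ) :
    IsCompact (innerPar Ω K l) :=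
  hΩ.of_isClosed_subset (isClosed_innerPar hΩ.isClosed l) (innerPar_subset h0K l)

theorem vadd_smul_subset_innerPar (hΩ : Convex ℝ Ω) {r l : ℝ} (hr : 0 < r) (hl : 0 ≤ l)
    (hlr : l ≤ r) {x₀ : EuclideanSpace ℝ (Fin n)} (hx₀ : x₀ ∈ innerPar Ω K r) :
    (l / r) • x₀ +ᵥ (1 - l / r) • Ω ⊆ innerPar Ω K l := by
  rintro _ ⟨_, ⟨ω, hω, rfl⟩, rfl⟩ y hy
  have hlr' : l / r ≤ 1 := (div_le_one hr).2 hlr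
  convert hΩ hω (hx₀ y hy) (sub_nonneg.2 hlr') (div_nonneg hl hr.le) (sub_add_cancel 1 _) using 1
  show (l / r) • x₀ + (1 - l / r) • ω + l • y = _
  rw [smul_add, smul_smul, div_mul_cancel₀ l hr.ne']
  abel

theorem innerPar_vadd_right (Ω K : Set (EuclideanSpace ℝ (Fin n))) (w : EuclideanSpace ℝ (Fin n))
    (l : ℝ) : innerPar Ω (w +ᵥ K) l = -(l • w) +ᵥ innerPar Ω K l := by
  ext x
  simp only [innerPar, mem_vadd_set, forall_exists_index, and_imp, forall_apply_eq_imp_iff₂,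
    vadd_eq_add, mem_ofPred_eq]
  constructor
  · intro hx
    exact ⟨x + l • w, fun y hy => by simpa [smul_add, add_assoc] using hx y hy, by abel⟩
  · rintro ⟨p, hp, rfl⟩ y hy
    convert hp y hy using 1
    rw [smul_add]
    abel

theorem inrad_eq_sSup (Ω K : Set (EuclideanSpace ℝ (Fin n))) :
    inrad Ω K = sSup {l | 0 ≤ l ∧ (innerPar Ω K l).Nonempty} :=
  rfl

theorem inrad_vadd_right (Ω K : Set (EuclideanSpace ℝ (Fin n))) (w : EuclideanSpace ℝ (Fin n)) :
    inrad Ω (w +ᵥ K) = inrad Ω K := by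
  simp only [inrad_eq_sSup, innerPar_vadd_right, vadd_set_nonempty]

theorem bddAbove_inrad_set (hΩ : Bornology.IsBounded Ω) (h0K : 0 ∈ K)
    {y : EuclideanSpace ℝ (Fin n)} (hy : y ∈ K) (hy0 : y ≠ 0) :
    BddAbove {l | 0 ≤ l ∧ (innerPar Ω K l).Nonempty} := by
  refine ⟨Metric.diam Ω / ‖y‖, ?_⟩
  rintro l ⟨hl, x, hx⟩
  rw [le_div_iff₀ (norm_pos_iff.2 hy0)]
  have := Metric.dist_le_diam_of_mem hΩ (hx y hy) (innerPar_subset h0K l hx)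
  rwa [dist_eq_norm, add_sub_cancel_left, norm_smul, Real.norm_of_nonneg hl] at this

theorem nonempty_innerPar_inrad (hΩ : IsCompact Ω) (hΩne : Ω.Nonempty) (h0K : 0 ∈ K)
    {y : EuclideanSpace ℝ (Fin n)} (hy : y ∈ K) (hy0 : y ≠ 0) :
    (innerPar Ω K (inrad Ω K)).Nonempty := by
  obtain ⟨b, hb⟩ := bddAbove_inrad_set hΩ.isBounded h0K hy hy0
  have hclosed : IsClosed {p : ℝ × EuclideanSpace ℝ (Fin n) | p.2 ∈ innerPar Ω K p.1} := by
    have : {p : ℝ × EuclideanSpace ℝ (Fin n) | p.2 ∈ innerPar Ω K p.1} =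
        ⋂ y ∈ K, (fun p : ℝ × EuclideanSpace ℝ (Fin n) => p.2 + p.1 • y) ⁻¹' Ω := by
      ext
      simp [innerPar]
    rw [this]
    exact isClosed_biInter fun y _ => hΩ.isClosed.preimage (by fun_prop)
  have hS : {l | 0 ≤ l ∧ (innerPar Ω K l).Nonempty} =
      Prod.fst '' (Icc 0 b ×ˢ Ω ∩ {p | p.2 ∈ innerPar Ω K p.1}) := by
    ext l
    constructor
    · rintro ⟨hl, x, hx⟩
      exact ⟨(l, x), ⟨⟨⟨hl, hb ⟨hl, x, hx⟩⟩, innerPar_subset h0K l hx⟩, hx⟩, rfl⟩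
    · rintro ⟨⟨l, x⟩, ⟨⟨⟨hl, -⟩, -⟩, hx⟩, rfl⟩
      exact ⟨hl, x, hx⟩
  have hcompact : IsCompact {l | 0 ≤ l ∧ (innerPar Ω K l).Nonempty} :=
    hS ▸ ((isCompact_Icc.prod hΩ).inter_right hclosed).image continuous_fst
  obtain ⟨x, hx⟩ := hΩne
  exact (hcompact.sSup_mem ⟨0, le_rfl, x, fun y _ => by simpa using hx⟩).2

theorem inrad_pos (hΩ : Bornology.IsBounded Ω) (hΩint : (interior Ω).Nonempty)
    (hK : Bornology.IsBounded K) (h0K : 0 ∈ K) {y : EuclideanSpace ℝ (Fin n)} (hy : y ∈ K)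
    (hy0 : y ≠ 0) : 0 < inrad Ω K := by
  obtain ⟨z, hz⟩ := hΩint
  obtain ⟨ε, hε, hball⟩ := Metric.mem_nhds_iff.1 (mem_interior_iff_mem_nhds.1 hz)
  obtain ⟨R, hR, hKR⟩ := hK.exists_pos_norm_le
  have hmem : ε / (2 * R) ∈ {l | 0 ≤ l ∧ (innerPar Ω K l).Nonempty} := by
    refine ⟨by positivity, z, fun y hy => hball ?_⟩
    rw [Metric.mem_ball, dist_eq_norm, add_sub_cancel_left, norm_smul,
      Real.norm_of_nonneg (by positivity)]
    calc ε / (2 * R) * ‖y‖ ≤ ε / (2 * R) * R := by gcongr; exact hKR y hy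
      _ < ε := by field_simp; linarith
  exact (div_pos hε (by positivity)).trans_le
    (le_csSup (bddAbove_inrad_set hΩ h0K hy hy0) hmem)

theorem aniPer_eq_slopeInf {C : Set (EuclideanSpace ℝ (Fin n))} (hC : IsCompact C)
    (hCconv : Convex ℝ C) (hK : IsCompact K) (hKconv : Convex ℝ K) (h0K : 0 ∈ K) :
    aniPer C K = slopeInf fun t => volGap volume C (t • K) :=
  (hasDerivWithinAt_measureReal_add_smul hC hCconv hK hKconv h0K).derivWithin
    (uniqueDiffOn_Ici 0 0 (mem_Ici.2 le_rfl))

theorem aniPer_vadd_left (C K : Set (EuclideanSpace ℝ (Fin n))) (w : EuclideanSpace ℝ (Fin n)) :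
    aniPer (w +ᵥ C) K = aniPer C K := by
  simp only [aniPer, vadd_add_assoc, measure_vadd]

theorem aniPer_vadd_right (C K : Set (EuclideanSpace ℝ (Fin n))) (w : EuclideanSpace ℝ (Fin n)) :
    aniPer C (w +ᵥ K) = aniPer C K := by
  have h : ∀ t : ℝ, C + t • (w +ᵥ K) = t • w +ᵥ (C + t • K) := fun t => by
    rw [← add_vadd_comm]
    congr 1
    ext x
    simp [mem_smul_set, mem_vadd_set, smul_add]
  simp only [aniPer, h, measure_vadd]

end RelativeGeometry

theorem larson_of_zero_mem {n : ℕ} (hn : 2 ≤ n) {Ω K : Set (EuclideanSpace ℝ (Fin n))}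
    (hΩc : IsCompact Ω) (hΩconv : Convex ℝ Ω) (hΩint : (interior Ω).Nonempty)
    (hKc : IsCompact K) (hKconv : Convex ℝ K) (h0K : 0 ∈ K) {y : EuclideanSpace ℝ (Fin n)}
    (hy : y ∈ K) (hy0 : y ≠ 0) {l : ℝ} (hl : 0 ≤ l) :
    (max (1 - l / inrad Ω K) 0) ^ (n - 1) * aniPer Ω K ≤ aniPer (innerPar Ω K l) K := by
  set r := inrad Ω K
  have hr : 0 < r := inrad_pos hΩc.isBounded hΩint hKc.isBounded h0K hy hy0
  obtain ⟨x₀, hx₀⟩ := nonempty_innerPar_inrad hΩc (hΩint.mono interior_subset) h0K hy hy0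
  have hP := isCompact_innerPar hΩc h0K l
  rw [aniPer_eq_slopeInf hP (convex_innerPar hΩconv l) hKc hKconv h0K,
    aniPer_eq_slopeInf hΩc hΩconv hKc hKconv h0K]
  rcases le_or_gt r l with hrl | hlr
  · rw [max_eq_right (by linarith [(one_le_div hr).2 hrl]), zero_pow (by omega), zero_mul]
    exact le_slopeInf fun t ht =>
      div_nonneg (volGap_nonneg hP (hKc.smul t) (zero_mem_smul_set h0K)) ht.le
  set c := 1 - l / r
  have hc : 0 < c := sub_pos.2 ((div_lt_one hr).2 hlr)
  rw [max_eq_left hc.le]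
  refine le_slopeInf fun s hs => ?_
  have hD := vadd_smul_subset_innerPar hΩconv hr hl hlr.le hx₀
  calc c ^ (n - 1) * slopeInf (fun t => volGap volume Ω (t • K))
      ≤ c ^ (n - 1) * (volGap volume Ω ((s / c) • K) / (s / c)) := by
        gcongr
        exact slopeInf_le (fun t _ => volGap_nonneg hΩc (hKc.smul t) (zero_mem_smul_set h0K))
          (div_pos hs hc)
    _ = volGap volume ((l / r) • x₀ +ᵥ c • Ω) (c • (s / c) • K) / s := by
        rw [volGap_vadd_smul _ hc.le, finrank_euclideanSpace_fin,
          ← pow_sub_one_mul (show n ≠ 0 by omega) c]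
        field_simp
    _ ≤ volGap volume (innerPar Ω K l) (s • K) / s := by
        rw [smul_smul, mul_div_cancel₀ s hc.ne']
        gcongr
        exact volGap_mono ((hΩc.smul c).vadd _) ((hΩconv.smul c).vadd _) hP (hKc.smul s)
          (zero_mem_smul_set h0K) hD

/-- anisotropic Larson inequality:
`Per_K(Ω ∼ λK) ≥ (1 - λ/r)₊^{n-1} · Per_K(Ω)` for all `λ ≥ 0`. -/
theorem stmt12 {n : ℕ} (hn : 2 ≤ n) (Ω K : Set (EuclideanSpace ℝ (Fin n)))
    (hΩc : IsCompact Ω) (hΩconv : Convex ℝ Ω) (hΩint : (interior Ω).Nonempty)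
    (hKc : IsCompact K) (hKconv : Convex ℝ K) (hKint : (interior K).Nonempty)
    (l : ℝ) (hl : 0 ≤ l) :
    (max (1 - l / inrad Ω K) 0) ^ (n - 1) * aniPer Ω K
      ≤ aniPer (innerPar Ω K l) K := by
  obtain ⟨y₀, hy₀⟩ := hKint
  have : Nontrivial (Fin n) := Fin.nontrivial_iff_two_le.2 hn
  have h0K : (0 : EuclideanSpace ℝ (Fin n)) ∈ -y₀ +ᵥ K :=
    ⟨y₀, interior_subset hy₀, neg_add_cancel y₀⟩
  obtain ⟨y, hy, hy0⟩ : ∃ y ∈ -y₀ +ᵥ K, y ≠ 0 := by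
    by_contra! hK
    have := interior_mono fun y hy => mem_singleton_iff.2 (hK y hy)
    rw [interior_singleton, interior_vadd] at this
    exact this ⟨y₀, hy₀, neg_add_cancel y₀⟩
  have := larson_of_zero_mem hn hΩc hΩconv hΩint (hKc.vadd _) (hKconv.vadd _) h0K hy hy0 hl
  rwa [inrad_vadd_right, aniPer_vadd_right, innerPar_vadd_right, aniPer_vadd_right,
    aniPer_vadd_left] at this
end
end

section
/- Let Ω, K ⊂ ℝⁿ be convex bodies with nonempty interior, r = r(Ω,K), λ* ∈ [0, r), and assume rK ⊆ Ω (after translation). Set Ω* := Ω ∼ λ*K. Then for every λ ∈ [λ*, r], ((r−λ)/(r−λ*))·Ω* ⊆ Ω ∼ λK. -/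
open Pointwise MeasureTheory Set

noncomputable section

theorem smul_innerPar_subset_innerPar {n : ℕ} {Ω K : Set (EuclideanSpace ℝ (Fin n))}
    (hΩ : Convex ℝ Ω) {r : ℝ} (hrK : r • K ⊆ Ω) {t : ℝ} (ht₀ : 0 ≤ t) (ht₁ : t ≤ 1) (μ : ℝ) :
    t • innerPar Ω K μ ⊆ innerPar Ω K (t * μ + (1 - t) * r) := by
  rintro _ ⟨x, hx, rfl⟩ y hy
  have hcomb : t • (x + μ • y) + (1 - t) • (r • y) = t • x + (t * μ + (1 - t) * r) • y := by
    module
  rw [← hcomb]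
  exact hΩ (hx y hy) (hrK (smul_mem_smul_set hy)) ht₀ (by linarith) (by ring)

theorem stmt15_general {n : ℕ} (Ω K : Set (EuclideanSpace ℝ (Fin n)))
    (hΩconv : Convex ℝ Ω)
    (hKΩ : inrad Ω K • K ⊆ Ω)
    (lstar : ℝ) (hls : lstar ∈ Set.Ico 0 (inrad Ω K)) :
    ∀ l ∈ Set.Icc lstar (inrad Ω K),
      ((inrad Ω K - l) / (inrad Ω K - lstar)) • innerPar Ω K lstar ⊆
        innerPar Ω K l := by
  rintro l ⟨hl₁, hl₂⟩
  set r := inrad Ω K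
  have hden : 0 < r - lstar := by linarith [hls.2]
  have ht₀ : 0 ≤ (r - l) / (r - lstar) := div_nonneg (by linarith) hden.le
  have ht₁ : (r - l) / (r - lstar) ≤ 1 := (div_le_one hden).2 (by linarith)
  have hcomb : (r - l) / (r - lstar) * lstar + (1 - (r - l) / (r - lstar)) * r = l := by
    field_simp
    ring
  simpa only [hcomb] using smul_innerPar_subset_innerPar hΩconv hKΩ ht₀ ht₁ lstar

/-- if `rK ⊆ Ω`, then `((r-λ)/(r-λ*)) • (Ω ∼ λ*K) ⊆ Ω ∼ λK` for
all `λ ∈ [λ*, r]`. -/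
theorem stmt15 {n : ℕ} (Ω K : Set (EuclideanSpace ℝ (Fin n)))
    (hΩc : IsCompact Ω) (hΩconv : Convex ℝ Ω) (hΩint : (interior Ω).Nonempty)
    (hKc : IsCompact K) (hKconv : Convex ℝ K) (hKint : (interior K).Nonempty)
    (hKΩ : inrad Ω K • K ⊆ Ω)
    (lstar : ℝ) (hls : lstar ∈ Set.Ico 0 (inrad Ω K)) :
    ∀ l ∈ Set.Icc lstar (inrad Ω K),
      ((inrad Ω K - l) / (inrad Ω K - lstar)) • innerPar Ω K lstar ⊆
        innerPar Ω K l :=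
  stmt15_general Ω K hΩconv hKΩ lstar hls
end
end

section
/- Let Ω, K ⊂ ℝ² be planar convex bodies with nonempty interior, r = r(Ω,K), and suppose that Ω ∼ λK = (r − λ)·K (after translation) for all λ ∈ [λ*, r] for some λ* ∈ [0, r). Then Ω = rK, i.e., Ω is homothetic to K. -/
/-!
Since `Ω ∼ rK = {0}`, we have `rK ⊆ Ω`, and then concavity of the family of
inner parallel bodies gives `(1 - λ/r) Ω ⊆ Ω ∼ λK`. With `Ω ∼ λK = (r - λ) K` for a single
`λ ∈ [0, r)` this reads `(1 - λ/r) Ω ⊆ (1 - λ/r) rK`, i.e. `Ω ⊆ rK`.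
-/

open Pointwise MeasureTheory Set

noncomputable section

section InnerParallel

variable {n : ℕ} {Ω K : Set (EuclideanSpace ℝ (Fin n))}

theorem zero_mem_innerPar_iff {l : ℝ} : 0 ∈ innerPar Ω K l ↔ l • K ⊆ Ω := by
  simp [innerPar, subset_def, mem_smul_set]

theorem nonempty_of_innerPar_eq_smul {l c : ℝ} (h : innerPar Ω K l = c • K) : K.Nonempty := by
  rw [nonempty_iff_ne_empty]
  rintro rfl
  simp [innerPar] at h

theorem Convex.combo_mem_innerPar_mul (hΩ : Convex ℝ Ω) {x z : EuclideanSpace ℝ (Fin n)}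
    {l t : ℝ} (hx : x ∈ Ω) (hz : z ∈ innerPar Ω K l) (ht₀ : 0 ≤ t) (ht₁ : t ≤ 1) :
    (1 - t) • x + t • z ∈ innerPar Ω K (t * l) := by
  intro y hy
  have key : (1 - t) • x + t • (z + l • y) ∈ Ω :=
    hΩ hx (hz y hy) (sub_nonneg.2 ht₁) ht₀ (sub_add_cancel 1 t)
  rwa [smul_add, smul_smul, ← add_assoc] at key

theorem Convex.subset_smul_of_innerPar_eq_smul (hΩ : Convex ℝ Ω) {l r : ℝ} (hrK : r • K ⊆ Ω)
    (hl : 0 ≤ l) (hlr : l < r) (h : innerPar Ω K l = (r - l) • K) : Ω ⊆ r • K := by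
  intro x hx
  have hr : 0 < r := hl.trans_lt hlr
  have hc : 0 < 1 - l / r := sub_pos.2 ((div_lt_one hr).2 hlr)
  have hmem : (1 - l / r) • x ∈ innerPar Ω K l := by
    simpa [div_mul_cancel₀ l hr.ne'] using
      hΩ.combo_mem_innerPar_mul hx (zero_mem_innerPar_iff.2 hrK) (div_nonneg hl hr.le)
        ((div_le_one hr).2 hlr.le)
  obtain ⟨k, hk, hkx⟩ : (1 - l / r) • x ∈ (r - l) • K := h ▸ hmem
  refine ⟨k, hk, smul_right_injective _ hc.ne' ?_⟩
  have hrl : r - l = (1 - l / r) * r := by field_simp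
  simpa [hrl, mul_smul] using hkx

end InnerParallel

theorem stmt18_general (Ω K : Set (EuclideanSpace ℝ (Fin 2)))
    (hΩconv : Convex ℝ Ω)
    (lstar : ℝ) (hls : lstar ∈ Set.Ico 0 (inrad Ω K))
    (hpar : ∀ l ∈ Set.Icc lstar (inrad Ω K), innerPar Ω K l = (inrad Ω K - l) • K) :
    Ω = inrad Ω K • K := by
  set r := inrad Ω K
  have hr : innerPar Ω K r = (r - r) • K := hpar r ⟨hls.2.le, le_rfl⟩
  have hrK : r • K ⊆ Ω := by
    rw [← zero_mem_innerPar_iff, hr, sub_self,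
      zero_smul_set (nonempty_of_innerPar_eq_smul hr)]
    rfl
  exact (hΩconv.subset_smul_of_innerPar_eq_smul hrK hls.1 hls.2
    (hpar lstar ⟨le_rfl, hls.2.le⟩)).antisymm hrK

/-- in the plane, if `Ω ∼ λK = (r-λ)K` for all `λ ∈ [λ*, r]`,
then `Ω = rK`. -/
theorem stmt18 (Ω K : Set (EuclideanSpace ℝ (Fin 2)))
    (hΩc : IsCompact Ω) (hΩconv : Convex ℝ Ω) (hΩint : (interior Ω).Nonempty)
    (hKc : IsCompact K) (hKconv : Convex ℝ K) (hKint : (interior K).Nonempty)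
    (lstar : ℝ) (hls : lstar ∈ Set.Ico 0 (inrad Ω K))
    (hpar : ∀ l ∈ Set.Icc lstar (inrad Ω K), innerPar Ω K l = (inrad Ω K - l) • K) :
    Ω = inrad Ω K • K :=
  stmt18_general Ω K hΩconv lstar hls hpar
end
end
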